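/- If (q,v) =u=> (q',v') is a local run where both v and v' are synchronized local valuations, then there exists w ~ u and a global run (q, global(v)) -w-> (q', global(v')). -/

import Mathlib

open Classical

/-- Comparison operators appearing in guards `x ~ c`. -/
inductive Cmp | lt | le | eq | ge | gt

def Cmp.sat : Cmp → ℝ → ℤ → Prop
  | .lt, r, c => r < (c : ℝ)
  | .le, r, c => r ≤ (c : ℝ)
  | .eq, r, c => r = (c : ℝ)
  | .ge, r, c => (c : ℝ) ≤ r
  | .gt, r, c => (c : ℝ) < r

/-- A guard: a finite conjunction of constraints `x ~ c` on clocks. -/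
abbrev Guard (Clock : Type) := List (Clock × Cmp × ℤ)

/-- A difference constraint `y₁ - y₂ ◁ c` over variables `V`;
the boolean is `true` for strict `<` and `false` for `≤`. -/
abbrev DiffConstraint (V : Type) := V × V × Bool × ℤ

/-- Satisfaction of a difference constraint. -/
def csat {V : Type} (v : V → ℝ) (c : DiffConstraint V) : Prop :=
  if c.2.2.1 then v c.1 - v c.2.1 < (c.2.2.2 : ℝ) else v c.1 - v c.2.1 ≤ (c.2.2.2 : ℝ)

/-- A network of timed automata: `k` processes, each owning its clocks and
locations; each action `b` has a domain `dom b` of synchronizing processes, and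
for each process in the domain a set of `b`-transitions (location, guard, reset
set, target location), whose guards and resets only mention own clocks. -/
structure Network where
  k : ℕ
  kpos : 0 < k
  Clock : Type
  [clockFin : Fintype Clock]
  owner : Clock → Fin k
  Act : Type
  dom : Act → Finset (Fin k)
  Loc : Fin k → Type
  init : ∀ p, Loc p
  Trans : ∀ (_ : Act) (p : Fin k), Set (Loc p × Guard Clock × Set Clock × Loc p)
  trans_wf : ∀ b p tr, tr ∈ Trans b p →
    (∀ c ∈ tr.2.1, owner c.1 = p) ∧ (∀ x ∈ tr.2.2.1, owner x = p)

attribute [instance] Network.clockFin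

namespace Network

variable (N : Network)

/-- Global (discrete) states of the network. -/
abbrev State := ∀ p, N.Loc p

/-- Variables of local valuations: offset variables `x̃` and reference clocks `t_p`. -/
abbrev LVar := N.Clock ⊕ Fin N.k

/-- Variables of global valuations: offset variables `x̃` and the global reference clock `t`. -/
abbrev GVar := N.Clock ⊕ Unit

abbrev LVal := N.LVar → ℝ

abbrev GVal := N.GVar → ℝ

/-- A local valuation: nonnegative, and each offset is below the owner's reference clock. -/
def IsLVal (v : N.LVal) : Prop :=
  (∀ y, 0 ≤ v y) ∧ ∀ x : N.Clock, v (.inl x) ≤ v (.inr (N.owner x))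

/-- A global valuation: nonnegative, and each offset is below the global time `t`. -/
def IsGVal (v : N.GVal) : Prop :=
  (∀ y, 0 ≤ v y) ∧ ∀ x : N.Clock, v (.inl x) ≤ v (.inr ())

/-- Satisfaction of a guard by a local valuation: the value of clock `x` is
`v t_p - v x̃` where `p` owns `x`. -/
def lgsat (v : N.LVal) (g : Guard N.Clock) : Prop :=
  ∀ c ∈ g, Cmp.sat c.2.1 (v (.inr (N.owner c.1)) - v (.inl c.1)) c.2.2

/-- Satisfaction of a guard by a global valuation: the value of clock `x` is `v t - v x̃`. -/
def ggsat (v : N.GVal) (g : Guard N.Clock) : Prop :=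
  ∀ c ∈ g, Cmp.sat c.2.1 (v (.inr ()) - v (.inl c.1)) c.2.2

/-- Global delay: only the global reference clock advances. -/
def gdelay (v : N.GVal) (δ : ℝ) : N.GVal :=
  fun y => match y with
    | .inl x => v (.inl x)
    | .inr _ => v (.inr ()) + δ

/-- `v'` is obtained from `v` by a (finite) sequence of local delays; equivalently,
each reference clock advances by some nonnegative amount, offsets are unchanged. -/
def ldelayed (v v' : N.LVal) : Prop :=
  ∃ δ : Fin N.k → ℝ, (∀ p, 0 ≤ δ p) ∧
    v' = fun y => match y with
      | .inl x => v (.inl x)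
      | .inr p => v (.inr p) + δ p

/-- Reset of the clocks in `R` in a global valuation. -/
noncomputable def greset (R : Set N.Clock) (v : N.GVal) : N.GVal :=
  fun y => match y with
    | .inl x => if x ∈ R then v (.inr ()) else v (.inl x)
    | .inr u => v (.inr u)

/-- Reset of the clocks in `R` in a local valuation: `x̃` is set to the local
time of the process owning `x`. -/
noncomputable def lreset (R : Set N.Clock) (v : N.LVal) : N.LVal :=
  fun y => match y with
    | .inl x => if x ∈ R then v (.inr (N.owner x)) else v (.inl x)
    | .inr p => v (.inr p)

/-- Global action step on action `b`. -/
def gact (b : N.Act) (c c' : N.State × N.GVal) : Prop :=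
  ∃ tr : ∀ p, p ∈ N.dom b → N.Loc p × Guard N.Clock × Set N.Clock × N.Loc p,
    (∀ p (h : p ∈ N.dom b),
      tr p h ∈ N.Trans b p ∧ (tr p h).1 = c.1 p ∧ (tr p h).2.2.2 = c'.1 p) ∧
    (∀ p, p ∉ N.dom b → c'.1 p = c.1 p) ∧
    (∀ p (h : p ∈ N.dom b), N.ggsat c.2 (tr p h).2.1) ∧
    c'.2 = N.greset {x | ∃ p h, x ∈ (tr p h).2.2.1} c.2

/-- Local action step on action `b`: additionally the reference clocks of the
processes in `dom b` must agree. -/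
def lact (b : N.Act) (c c' : N.State × N.LVal) : Prop :=
  ∃ tr : ∀ p, p ∈ N.dom b → N.Loc p × Guard N.Clock × Set N.Clock × N.Loc p,
    (∀ p (h : p ∈ N.dom b),
      tr p h ∈ N.Trans b p ∧ (tr p h).1 = c.1 p ∧ (tr p h).2.2.2 = c'.1 p) ∧
    (∀ p, p ∉ N.dom b → c'.1 p = c.1 p) ∧
    (∀ p ∈ N.dom b, ∀ p' ∈ N.dom b, c.2 (.inr p) = c.2 (.inr p')) ∧
    (∀ p (h : p ∈ N.dom b), N.lgsat c.2 (tr p h).2.1) ∧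
    c'.2 = N.lreset {x | ∃ p h, x ∈ (tr p h).2.2.1} c.2

/-- Global run on a word of actions: delays and action steps alternate,
starting and ending with a (possibly zero) delay. -/
inductive GRun : List N.Act → (N.State × N.GVal) → (N.State × N.GVal) → Prop
  | nil {q v} (δ : ℝ) (hδ : 0 ≤ δ) : GRun [] (q, v) (q, N.gdelay v δ)
  | cons {b u q v c1 c2} (δ : ℝ) (hδ : 0 ≤ δ)
      (hb : N.gact b (q, N.gdelay v δ) c1) (h : GRun u c1 c2) :
      GRun (b :: u) (q, v) c2

/-- Local run on a word of actions: sequences of local delays and local action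
steps alternate. -/
inductive LRun : List N.Act → (N.State × N.LVal) → (N.State × N.LVal) → Prop
  | nil {q v v'} (hd : N.ldelayed v v') : LRun [] (q, v) (q, v')
  | cons {b u q v v1 c1 c2} (hd : N.ldelayed v v1)
      (hb : N.lact b (q, v1) c1) (h : LRun u c1 c2) :
      LRun (b :: u) (q, v) c2

/-- Local run recording, for each action, its execution time: the common value
of the reference clocks of `dom b` when the step is taken. -/
inductive LRunT : List (N.Act × ℝ) → (N.State × N.LVal) → (N.State × N.LVal) → Prop
  | nil {q v v'} (hd : N.ldelayed v v') : LRunT [] (q, v) (q, v')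
  | cons {b θ u q v v1 c1 c2} (hd : N.ldelayed v v1)
      (hb : N.lact b (q, v1) c1) (hθ : ∀ p ∈ N.dom b, v1 (.inr p) = θ)
      (h : LRunT u c1 c2) :
      LRunT ((b, θ) :: u) (q, v) c2

/-- Equivalence of action sequences: generated by swapping adjacent actions
with disjoint domains. -/
inductive equiv : List N.Act → List N.Act → Prop
  | swap (u w : List N.Act) (a b : N.Act) (h : Disjoint (N.dom a) (N.dom b)) :
      equiv (u ++ a :: b :: w) (u ++ b :: a :: w)
  | refl (u : List N.Act) : equiv u u
  | trans {u v w} : equiv u v → equiv v w → equiv u w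

/-- A local valuation is synchronized if all reference clocks agree. -/
def Synchronized (v : N.LVal) : Prop :=
  ∀ p p' : Fin N.k, v (.inr p) = v (.inr p')

/-- The global valuation associated to a (synchronized) local valuation. -/
def toGlobal (v : N.LVal) : N.GVal :=
  fun y => match y with
    | .inl x => v (.inl x)
    | .inr _ => v (.inr ⟨0, N.kpos⟩)

/-- The synchronized local valuation associated to a global valuation. -/
def toLocal (v : N.GVal) : N.LVal :=
  fun y => match y with
    | .inl x => v (.inl x)
    | .inr _ => v (.inr ())

/-- The synchronized valuations of a set of local valuations. -/
def syncSet (S : Set N.LVal) : Set N.LVal := {v ∈ S | N.Synchronized v}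

/-- The set of local valuations defined by a list of difference constraints. -/
def lzset (L : List (DiffConstraint N.LVar)) : Set N.LVal :=
  {v | N.IsLVal v ∧ ∀ c ∈ L, csat v c}

/-- The set of global valuations defined by a list of difference constraints. -/
def gzset (L : List (DiffConstraint N.GVar)) : Set N.GVal :=
  {v | N.IsGVal v ∧ ∀ c ∈ L, csat v c}

/-- Local zones: sets of local valuations definable by difference constraints. -/
def IsLZone (S : Set N.LVal) : Prop := ∃ L, S = N.lzset L

/-- Global zones: sets of global valuations definable by difference constraints. -/
def IsGZone (S : Set N.GVal) : Prop := ∃ L, S = N.gzset L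

/-- Local-time elapse of a set of local valuations. -/
def lelapse (S : Set N.LVal) : Set N.LVal := {v' | ∃ v ∈ S, N.ldelayed v v'}

/-- Global time elapse of a set of global valuations. -/
def gelapse (S : Set N.GVal) : Set N.GVal :=
  {v' | ∃ v ∈ S, ∃ δ, 0 ≤ δ ∧ v' = N.gdelay v δ}

/-- Local zone graph step on action `b`:
`Z' = local-elapse([R](Z ∩ Z_g ∩ Z_sync))`, required nonempty. -/
def lzstep (b : N.Act) (c c' : N.State × Set N.LVal) : Prop :=
  ∃ tr : ∀ p, p ∈ N.dom b → N.Loc p × Guard N.Clock × Set N.Clock × N.Loc p,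
    (∀ p (h : p ∈ N.dom b),
      tr p h ∈ N.Trans b p ∧ (tr p h).1 = c.1 p ∧ (tr p h).2.2.2 = c'.1 p) ∧
    (∀ p, p ∉ N.dom b → c'.1 p = c.1 p) ∧
    c'.2 = N.lelapse ((N.lreset {x | ∃ p h, x ∈ (tr p h).2.2.1}) ''
      (c.2 ∩ {v | ∀ p (h : p ∈ N.dom b), N.lgsat v (tr p h).2.1}
           ∩ {v | ∀ p ∈ N.dom b, ∀ p' ∈ N.dom b, v (.inr p) = v (.inr p')})) ∧
    (c'.2).Nonempty

/-- Sequence of local zone graph steps along a word. -/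
inductive LZRun : List N.Act → (N.State × Set N.LVal) → (N.State × Set N.LVal) → Prop
  | nil (c) : LZRun [] c c
  | cons {b u c c1 c2} (hb : N.lzstep b c c1) (h : LZRun u c1 c2) :
      LZRun (b :: u) c c2

/-- The initial (discrete) state of the network. -/
def initState : N.State := N.init

/-- The initial global valuation: everything is `0`. -/
def gvalInit : N.GVal := fun _ => 0

/-- The initial local valuation: everything is `0`. -/
def lvalInit : N.LVal := fun _ => 0

/-- The initial node's zone in the local zone graph. -/
def lzoneInit : Set N.LVal := N.lelapse {N.lvalInit}

/-- State `q` is reachable in the global-time semantics. -/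
def GReach (q : N.State) : Prop :=
  ∃ u v, N.GRun u (N.initState, N.gvalInit) (q, v)

/-- State `q` is reachable in the local-time semantics. -/
def LReach (q : N.State) : Prop :=
  ∃ u v, N.LRun u (N.initState, N.lvalInit) (q, v)

/-- Time-abstract simulation between global valuations. -/
def TASim (sim : N.GVal → N.GVal → Prop) : Prop :=
  ∀ v1 v2, sim v1 v2 → ∀ q b δ1 q' v1', 0 ≤ δ1 →
    N.gact b (q, N.gdelay v1 δ1) (q', v1') →
    ∃ δ2, 0 ≤ δ2 ∧ ∃ v2', N.gact b (q, N.gdelay v2 δ2) (q', v2') ∧ sim v1' v2'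

end Network

/-- A local sync graph over a network `N`, based on an abstraction `abs` over
global zones: a subgraph of the local zone graph with covered/uncovered nodes,
satisfying conditions C0–C4. -/
structure SyncGraph (N : Network) (abs : Set N.GVal → Set N.GVal) where
  nodes : Set (N.State × Set N.LVal)
  covered : N.State × Set N.LVal → Prop
  edges : (N.State × Set N.LVal) → (N.State × Set N.LVal) → Prop
  edges_mem : ∀ s s', edges s s' → s ∈ nodes ∧ s' ∈ nodes
  edges_lzg : ∀ s s', edges s s' → ∃ b, N.lzstep b s s'
  init_mem : (N.initState, N.lzoneInit) ∈ nodes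
  init_unc : ¬ covered (N.initState, N.lzoneInit)
  reach : ∀ s ∈ nodes, Relation.ReflTransGen edges (N.initState, N.lzoneInit) s
  unc_succ : ∀ s ∈ nodes, ¬ covered s → ∀ b s', N.lzstep b s s' → edges s s'
  cov_sub : ∀ s ∈ nodes, covered s → ∃ s' ∈ nodes, ¬ covered s' ∧ s.1 = s'.1 ∧
    N.toGlobal '' N.syncSet s.2 ⊆ abs (N.toGlobal '' N.syncSet s'.2)
  cov_nosucc : ∀ s s', covered s → ¬ edges s s'

/-- A list of difference constraints is canonical (every constraint is tight):
no constraint is implied by the remaining ones. -/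
def canonicalL (N : Network) (L : List (DiffConstraint N.LVar)) : Prop :=
  ∀ c ∈ L, ∃ v, N.IsLVal v ∧ (∀ c' ∈ L, c' ≠ c → csat v c') ∧ ¬ csat v c

/-- Minea's region-like equivalence with maximal constant `cmax`. -/
def regEquiv {V : Type} (cmax : ℤ) (v1 v2 : V → ℝ) : Prop :=
  ∀ a b : V, (⌊v1 a - v1 b⌋ = ⌊v2 a - v2 b⌋) ∨
    (⌊v1 a - v1 b⌋ > cmax ∧ ⌊v2 a - v2 b⌋ > cmax) ∨
    (⌊v1 a - v1 b⌋ < -cmax ∧ ⌊v2 a - v2 b⌋ < -cmax)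


/-! Record in a local run the execution time of every action, the common reference time of its
processes. Two adjacent actions sharing a process occur in time order, so an adjacent pair out of
time order has disjoint domains and can be swapped, after moving the local delays of the second
action's processes in front of the first action; insertion sort thus turns the run into an
equivalent one whose execution times are nondecreasing. Such a run is simulated by a global run
that lets time elapse up to each execution time and then fires the action: the offsets of the
local and of the global valuation stay equal throughout. -/

namespace Network

variable {N : Network}

section Valuations

variable (N) in
def ldelay (v : N.LVal) (δ : Fin N.k → ℝ) : N.LVal :=
  fun y => match y with
    | .inl x => v (.inl x)
    | .inr p => v (.inr p) + δ p

@[simp] lemma ldelay_inl (v : N.LVal) (δ : Fin N.k → ℝ) (x : N.Clock) :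
    N.ldelay v δ (.inl x) = v (.inl x) := rfl

@[simp] lemma ldelay_inr (v : N.LVal) (δ : Fin N.k → ℝ) (p : Fin N.k) :
    N.ldelay v δ (.inr p) = v (.inr p) + δ p := rfl

lemma ldelay_ldelay (v : N.LVal) (δ δ' : Fin N.k → ℝ) :
    N.ldelay (N.ldelay v δ) δ' = N.ldelay v (δ + δ') := by
  funext y; cases y <;> simp [add_assoc]

lemma ldelay_zero (v : N.LVal) : N.ldelay v 0 = v := by
  funext y; cases y <;> simp

lemma ldelayed_iff {v v' : N.LVal} :
    N.ldelayed v v' ↔ ∃ δ, (∀ p, 0 ≤ δ p) ∧ v' = N.ldelay v δ := Iff.rfl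

lemma ldelayed_refl (v : N.LVal) : N.ldelayed v v :=
  ⟨0, fun _ => le_rfl, (ldelay_zero v).symm⟩

lemma ldelayed_trans {v₁ v₂ v₃ : N.LVal} (h₁ : N.ldelayed v₁ v₂) (h₂ : N.ldelayed v₂ v₃) :
    N.ldelayed v₁ v₃ := by
  obtain ⟨δ, hδ, rfl⟩ := ldelayed_iff.1 h₁
  obtain ⟨δ', hδ', rfl⟩ := ldelayed_iff.1 h₂
  exact ⟨δ + δ', fun p => add_nonneg (hδ p) (hδ' p), ldelay_ldelay v₁ δ δ'⟩

lemma ldelayed.inl_eq {v v' : N.LVal} (h : N.ldelayed v v') (x : N.Clock) :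
    v' (.inl x) = v (.inl x) := by
  obtain ⟨δ, -, rfl⟩ := ldelayed_iff.1 h; rfl

lemma ldelayed.inr_le {v v' : N.LVal} (h : N.ldelayed v v') (p : Fin N.k) :
    v (.inr p) ≤ v' (.inr p) := by
  obtain ⟨δ, hδ, rfl⟩ := ldelayed_iff.1 h
  simpa using hδ p

end Valuations

section Locality

variable (N) in
def lvarOwner : N.LVar → Fin N.k
  | .inl x => N.owner x
  | .inr p => p

variable (N) in
def AgreeAt (p : Fin N.k) (c d : N.State × N.LVal) : Prop :=
  c.1 p = d.1 p ∧ ∀ y, N.lvarOwner y = p → c.2 y = d.2 y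

lemma AgreeAt.symm {p : Fin N.k} {c d : N.State × N.LVal} (h : N.AgreeAt p c d) :
    N.AgreeAt p d c :=
  ⟨h.1.symm, fun y hy => (h.2 y hy).symm⟩

lemma AgreeAt.trans {p : Fin N.k} {c d e : N.State × N.LVal} (h : N.AgreeAt p c d)
    (h' : N.AgreeAt p d e) : N.AgreeAt p c e :=
  ⟨h.1.trans h'.1, fun y hy => (h.2 y hy).trans (h'.2 y hy)⟩

lemma AgreeAt.ldelay {p : Fin N.k} {c d : N.State × N.LVal} (h : N.AgreeAt p c d)
    (δ : Fin N.k → ℝ) : N.AgreeAt p (c.1, N.ldelay c.2 δ) (d.1, N.ldelay d.2 δ) := by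
  refine ⟨h.1, fun y hy => ?_⟩
  cases y with
  | inl x => exact h.2 (.inl x) hy
  | inr p' => simp [h.2 (.inr p') hy]

lemma agreeAt_ldelay {p : Fin N.k} {δ : Fin N.k → ℝ} (hδ : δ p = 0) (q : N.State)
    (v : N.LVal) : N.AgreeAt p (q, v) (q, N.ldelay v δ) := by
  refine ⟨rfl, fun y hy => ?_⟩
  cases y with
  | inl x => rfl
  | inr p' => obtain rfl : p' = p := hy; simp [hδ]

lemma AgreeAt.lreset {p : Fin N.k} {c d : N.State × N.LVal} (h : N.AgreeAt p c d)
    (R : Set N.Clock) : N.AgreeAt p (c.1, N.lreset R c.2) (d.1, N.lreset R d.2) := by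
  refine ⟨h.1, fun y hy => ?_⟩
  cases y with
  | inl x =>
    simp only [Network.lreset]
    rw [h.2 (.inl x) hy, h.2 (.inr (N.owner x)) hy]
  | inr p' => exact h.2 (.inr p') hy

lemma agreeAt_lreset {p : Fin N.k} {R : Set N.Clock} (hR : ∀ x ∈ R, N.owner x ≠ p)
    (q : N.State) (v : N.LVal) : N.AgreeAt p (q, v) (q, N.lreset R v) := by
  refine ⟨rfl, fun y hy => ?_⟩
  cases y with
  | inl x =>
    have hx : x ∉ R := fun hx => hR x hx hy
    simp [Network.lreset, hx]
  | inr p' => rfl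

lemma owner_mem_dom_of_mem_reset {b : N.Act}
    {tr : ∀ p, p ∈ N.dom b → N.Loc p × Guard N.Clock × Set N.Clock × N.Loc p}
    (htr : ∀ p (h : p ∈ N.dom b), tr p h ∈ N.Trans b p) {x : N.Clock}
    (hx : x ∈ {x | ∃ p h, x ∈ (tr p h).2.2.1}) : N.owner x ∈ N.dom b := by
  obtain ⟨p, hp, hxp⟩ := hx
  rwa [(N.trans_wf b p _ (htr p hp)).2 x hxp]

lemma lact.inr_eq {b : N.Act} {q q' : N.State} {v w : N.LVal} (h : N.lact b (q, v) (q', w))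
    (p : Fin N.k) : w (.inr p) = v (.inr p) := by
  obtain ⟨_, -, -, -, -, hres⟩ := h
  exact congrFun hres (.inr p)

lemma lact.agreeAt_of_notMem {b : N.Act} {c c' : N.State × N.LVal} (h : N.lact b c c')
    {p : Fin N.k} (hp : p ∉ N.dom b) : N.AgreeAt p c c' := by
  obtain ⟨tr, htr, hq, -, -, hres⟩ := h
  rw [show c' = (c'.1, c'.2) from rfl, hres]
  refine (agreeAt_lreset (fun x hx hxp => hp ?_) c.1 c.2).trans ⟨(hq p hp).symm, fun _ _ => rfl⟩
  exact hxp ▸ owner_mem_dom_of_mem_reset (fun p h => (htr p h).1) hx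

/-- A local action only reads and writes the components of the processes taking part in it. -/
lemma lact.of_agreeAt {b : N.Act} {c c' d d' : N.State × N.LVal} (h : N.lact b c c')
    (hd : ∀ p ∈ N.dom b, N.AgreeAt p c d) (hd' : ∀ p ∈ N.dom b, N.AgreeAt p c' d')
    (hframe : ∀ p ∉ N.dom b, N.AgreeAt p d d') : N.lact b d d' := by
  obtain ⟨tr, htr, hq, hsync, hguard, hres⟩ := h
  refine ⟨tr, fun p hp => ?_, fun p hp => (hframe p hp).1.symm, fun p hp p' hp' => ?_,
    fun p hp g hg => ?_, ?_⟩
  · exact ⟨(htr p hp).1, (htr p hp).2.1.trans (hd p hp).1, (htr p hp).2.2.trans (hd' p hp).1⟩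
  · rw [← (hd p hp).2 (.inr p) rfl, ← (hd p' hp').2 (.inr p') rfl]
    exact hsync p hp p' hp'
  · have hown : N.owner g.1 = p := (N.trans_wf b p _ (htr p hp).1).1 g hg
    have := hguard p hp g hg
    rwa [(hd p hp).2 (.inr _) hown, (hd p hp).2 (.inl _) hown] at this
  · set R := {x | ∃ p h, x ∈ (tr p h).2.2.1}
    funext y
    by_cases hy : N.lvarOwner y ∈ N.dom b
    · rw [← (hd' _ hy).2 y rfl, hres]
      exact ((hd _ hy).lreset R).2 y rfl
    · refine ((hframe _ hy).2 y rfl).symm.trans ?_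
      refine (agreeAt_lreset (fun x hx hxp => hy ?_) d.1 d.2).2 y rfl
      exact hxp ▸ owner_mem_dom_of_mem_reset (fun p h => (htr p h).1) hx

lemma lact.ldelay {b : N.Act} {c c' : N.State × N.LVal} (h : N.lact b c c')
    {δ : Fin N.k → ℝ} (hδ : ∀ p ∈ N.dom b, δ p = 0) :
    N.lact b (c.1, N.ldelay c.2 δ) (c'.1, N.ldelay c'.2 δ) :=
  h.of_agreeAt (fun p hp => agreeAt_ldelay (hδ p hp) c.1 c.2)
    (fun p hp => agreeAt_ldelay (hδ p hp) c'.1 c'.2)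
    (fun _ hp => (h.agreeAt_of_notMem hp).ldelay δ)

variable (N) in
noncomputable def override (P : Finset (Fin N.k)) (c d : N.State × N.LVal) :
    N.State × N.LVal :=
  (fun p => if p ∈ P then d.1 p else c.1 p, fun y => if N.lvarOwner y ∈ P then d.2 y else c.2 y)

lemma agreeAt_override_of_mem {P : Finset (Fin N.k)} {p : Fin N.k} (hp : p ∈ P)
    (c d : N.State × N.LVal) : N.AgreeAt p (N.override P c d) d :=
  ⟨if_pos hp, fun _ hy => if_pos (hy ▸ hp)⟩

lemma agreeAt_override_of_notMem {P : Finset (Fin N.k)} {p : Fin N.k} (hp : p ∉ P)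
    (c d : N.State × N.LVal) : N.AgreeAt p (N.override P c d) c :=
  ⟨if_neg hp, fun _ hy => if_neg (hy ▸ hp)⟩

lemma lact_comm {a b : N.Act} {c c₁ c₂ : N.State × N.LVal} (ha : N.lact a c c₁)
    (hb : N.lact b c₁ c₂) (hab : Disjoint (N.dom a) (N.dom b)) :
    ∃ m, N.lact b c m ∧ N.lact a m c₂ := by
  have hba : ∀ p ∈ N.dom b, p ∉ N.dom a := fun p hp hpa => Finset.disjoint_left.1 hab hpa hp
  refine ⟨N.override (N.dom b) c c₂, hb.of_agreeAt ?_ ?_ ?_, ha.of_agreeAt ?_ ?_ ?_⟩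
  · exact fun p hp => (ha.agreeAt_of_notMem (hba p hp)).symm
  · exact fun p hp => (agreeAt_override_of_mem hp c c₂).symm
  · exact fun p hp => (agreeAt_override_of_notMem hp c c₂).symm
  · exact fun p hp => (agreeAt_override_of_notMem (fun hpb => hba p hpb hp) c c₂).symm
  · exact fun p hp => hb.agreeAt_of_notMem (fun hpb => hba p hpb hp)
  · intro p hp
    by_cases hpb : p ∈ N.dom b
    · exact agreeAt_override_of_mem hpb c c₂
    · exact (agreeAt_override_of_notMem hpb c c₂).trans
        ((ha.agreeAt_of_notMem hp).trans (hb.agreeAt_of_notMem hpb))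

end Locality

section Reordering

lemma lrunT_cons_iff {x : N.Act × ℝ} {l : List (N.Act × ℝ)} {c c' : N.State × N.LVal} :
    N.LRunT (x :: l) c c' ↔ ∃ v₁ c₁, N.ldelayed c.2 v₁ ∧ N.lact x.1 (c.1, v₁) c₁ ∧
      (∀ p ∈ N.dom x.1, v₁ (.inr p) = x.2) ∧ N.LRunT l c₁ c' := by
  obtain ⟨b, θ⟩ := x
  obtain ⟨q, v⟩ := c
  constructor
  · rintro (_ | ⟨hd, hb, hθ, h⟩)
    exact ⟨_, _, hd, hb, hθ, h⟩
  · rintro ⟨v₁, c₁, hd, hb, hθ, h⟩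
    exact .cons hd hb hθ h

lemma LRunT.of_ldelayed {l : List (N.Act × ℝ)} {q : N.State} {v w : N.LVal}
    {c' : N.State × N.LVal} (hd : N.ldelayed v w) (h : N.LRunT l (q, w) c') :
    N.LRunT l (q, v) c' := by
  cases h with
  | nil hd' => exact .nil (ldelayed_trans hd hd')
  | cons hd' hb hθ h => exact .cons (ldelayed_trans hd hd') hb hθ h

lemma LRunT.le_of_mem_dom {x y : N.Act × ℝ} {l : List (N.Act × ℝ)} {c c' : N.State × N.LVal}
    (h : N.LRunT (x :: y :: l) c c') {p : Fin N.k} (hpx : p ∈ N.dom x.1)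
    (hpy : p ∈ N.dom y.1) : x.2 ≤ y.2 := by
  obtain ⟨v₁, c₁, -, hx, hθx, h⟩ := lrunT_cons_iff.1 h
  obtain ⟨v₂, -, hd, -, hθy, -⟩ := lrunT_cons_iff.1 h
  calc x.2 = v₁ (.inr p) := (hθx p hpx).symm
    _ = c₁.2 (.inr p) := (hx.inr_eq p).symm
    _ ≤ v₂ (.inr p) := hd.inr_le p
    _ = y.2 := hθy p hpy

/-- The delays of the processes of `b` between the two actions are moved in front of `a`, the
other delays stay behind `b`. -/
lemma LRunT.swap {a b : N.Act} {θa θb : ℝ} {l : List (N.Act × ℝ)} {c c' : N.State × N.LVal}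
    (h : N.LRunT ((a, θa) :: (b, θb) :: l) c c') (hab : Disjoint (N.dom a) (N.dom b)) :
    N.LRunT ((b, θb) :: (a, θa) :: l) c c' := by
  obtain ⟨q, v⟩ := c
  obtain ⟨v₁, ⟨q₁, w₁⟩, hd₁, ha, hθa, h⟩ := lrunT_cons_iff.1 h
  obtain ⟨v₂, c₂, hd₂, hb, hθb, hl⟩ := lrunT_cons_iff.1 h
  obtain ⟨δ, hδ, rfl⟩ := ldelayed_iff.1 hd₂
  dsimp only at ha hθa hb hθb
  have hb_not_a : ∀ p ∈ N.dom b, p ∉ N.dom a := fun p hp hpa => Finset.disjoint_left.1 hab hpa hp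
  set δb : Fin N.k → ℝ := fun p => if p ∈ N.dom b then δ p else 0
  set δr : Fin N.k → ℝ := fun p => if p ∈ N.dom b then 0 else δ p
  have hδb : ∀ p, 0 ≤ δb p := fun p => by by_cases hp : p ∈ N.dom b <;> simp [δb, hp, hδ p]
  have hδr : ∀ p, 0 ≤ δr p := fun p => by by_cases hp : p ∈ N.dom b <;> simp [δr, hp, hδ p]
  have ha' := ha.ldelay (δ := δb) fun p hp => if_neg fun hpb => hb_not_a p hpb hp
  dsimp only at ha'
  have hb' : N.lact b (q₁, N.ldelay w₁ δb) (c₂.1, N.ldelay c₂.2 (-δr)) := by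
    have hsplit : δb = δ + -δr := by
      funext p
      by_cases hp : p ∈ N.dom b <;> simp [δb, δr, hp]
    rw [hsplit, ← ldelay_ldelay]
    exact hb.ldelay fun p hp => by simp [δr, hp]
  obtain ⟨m, hbm, ham⟩ := lact_comm ha' hb' hab
  have hθb' : ∀ p ∈ N.dom b, N.ldelay v₁ δb (.inr p) = θb := by
    intro p hp
    rw [← hθb p hp, ldelay_inr, ldelay_inr, ← ha.inr_eq p]
    simp [δb, hp]
  have hθa' : ∀ p ∈ N.dom a, m.2 (.inr p) = θa := by
    intro p hp
    have hpb : p ∉ N.dom b := fun hpb => hb_not_a p hpb hp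
    rw [hbm.inr_eq p, ← hθa p hp]
    simp [δb, hpb]
  have hl' : N.LRunT l (c₂.1, N.ldelay c₂.2 (-δr)) c' := by
    refine hl.of_ldelayed (ldelayed_iff.2 ⟨δr, hδr, ?_⟩)
    rw [ldelay_ldelay, neg_add_cancel, ldelay_zero]
  have hd' : N.ldelayed v (N.ldelay v₁ δb) :=
    ldelayed_trans hd₁ (ldelayed_iff.2 ⟨δb, hδb, rfl⟩)
  exact .cons hd' hbm hθb' (.cons (ldelayed_refl m.2) ham hθa' hl')

lemma equiv.cons (a : N.Act) {u w : List N.Act} (h : N.equiv u w) :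
    N.equiv (a :: u) (a :: w) := by
  induction h with
  | swap u w x y hd => exact .swap (a :: u) w x y hd
  | refl u => exact .refl _
  | trans _ _ ih₁ ih₂ => exact .trans ih₁ ih₂

lemma LRunT.orderedInsert {x : N.Act × ℝ} {l : List (N.Act × ℝ)} {c c' : N.State × N.LVal}
    (h : N.LRunT (x :: l) c c') :
    N.LRunT (l.orderedInsert (Prod.snd ⁻¹'o (· ≤ ·)) x) c c' ∧
      N.equiv ((l.orderedInsert (Prod.snd ⁻¹'o (· ≤ ·)) x).map Prod.fst)
        ((x :: l).map Prod.fst) := by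
  induction l generalizing c with
  | nil => exact ⟨h, .refl _⟩
  | cons y l ih =>
    by_cases hxy : x.2 ≤ y.2
    · rw [List.orderedInsert_cons_of_le (Prod.snd ⁻¹'o (· ≤ ·)) l hxy]
      exact ⟨h, .refl _⟩
    rw [List.orderedInsert_of_not_le (Prod.snd ⁻¹'o (· ≤ ·)) l hxy]
    have hdisj : Disjoint (N.dom x.1) (N.dom y.1) :=
      Finset.disjoint_left.2 fun _ hpx hpy => hxy (h.le_of_mem_dom hpx hpy)
    obtain ⟨v₁, c₁, hd, hy, hθ, htail⟩ := lrunT_cons_iff.1 (h.swap hdisj)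
    obtain ⟨hrun, hequiv⟩ := ih htail
    exact ⟨lrunT_cons_iff.2 ⟨v₁, c₁, hd, hy, hθ, hrun⟩,
      (hequiv.cons y.1).trans (.swap [] _ y.1 x.1 hdisj.symm)⟩

lemma LRunT.insertionSort {l : List (N.Act × ℝ)} {c c' : N.State × N.LVal}
    (h : N.LRunT l c c') :
    N.LRunT (l.insertionSort (Prod.snd ⁻¹'o (· ≤ ·))) c c' ∧
      N.equiv ((l.insertionSort (Prod.snd ⁻¹'o (· ≤ ·))).map Prod.fst) (l.map Prod.fst) := by
  induction l generalizing c with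
  | nil => exact ⟨h, .refl _⟩
  | cons x l ih =>
    obtain ⟨v₁, c₁, hd, hx, hθ, htail⟩ := lrunT_cons_iff.1 h
    obtain ⟨hrun, hequiv⟩ := ih htail
    obtain ⟨hsorted, hequiv'⟩ := (lrunT_cons_iff.2 ⟨v₁, c₁, hd, hx, hθ, hrun⟩).orderedInsert
    exact ⟨hsorted, hequiv'.trans (hequiv.cons x.1)⟩

end Reordering

section ExecutionTimes

lemma LRun.inr_le {u : List N.Act} {c c' : N.State × N.LVal} (h : N.LRun u c c')
    (p : Fin N.k) : c.2 (.inr p) ≤ c'.2 (.inr p) := by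
  induction h with
  | nil hd => exact hd.inr_le p
  | cons hd hb _ ih => exact (hd.inr_le p).trans ((hb.inr_eq p).symm.trans_le ih)

/-- An action with empty domain has no execution time of its own; it is given one within the
bounds of the run. -/
lemma LRun.exists_lrunT {u : List N.Act} {c c' : N.State × N.LVal} (h : N.LRun u c c') :
    ∃ l : List (N.Act × ℝ), l.map Prod.fst = u ∧ N.LRunT l c c' ∧
      ∀ i ∈ l, ∃ p, c.2 (.inr p) ≤ i.2 ∧ i.2 ≤ c'.2 (.inr p) := by
  induction h with
  | nil hd => exact ⟨[], rfl, .nil hd, by simp⟩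
  | @cons b u q v v₁ c₁ c₂ hd hb h ih =>
    obtain ⟨l, rfl, hl, hbounds⟩ := ih
    obtain ⟨p₁, hp₁⟩ : ∃ p₁, ∀ p ∈ N.dom b, v₁ (.inr p) = v₁ (.inr p₁) := by
      rcases (N.dom b).eq_empty_or_nonempty with hempty | ⟨p₁, hp₁⟩
      · exact ⟨⟨0, N.kpos⟩, by simp [hempty]⟩
      · obtain ⟨_, -, -, hsync, -⟩ := hb
        exact ⟨p₁, fun p hp => hsync p hp p₁ hp₁⟩
    have hc₁ : ∀ p, c₁.2 (.inr p) = v₁ (.inr p) := fun p => by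
      obtain ⟨q₁, w₁⟩ := c₁
      exact hb.inr_eq p
    refine ⟨(b, v₁ (.inr p₁)) :: l, rfl, .cons hd hb hp₁ hl, ?_⟩
    rintro i (_ | ⟨_, hi⟩)
    · exact ⟨p₁, hd.inr_le p₁, (hc₁ p₁).symm.trans_le (h.inr_le p₁)⟩
    · obtain ⟨p, hlo, hhi⟩ := hbounds i hi
      exact ⟨p, ((hd.inr_le p).trans (hc₁ p).ge).trans hlo, hhi⟩

end ExecutionTimes

section Simulation

variable (N) in
def toGlobalAt (v : N.LVal) (θ : ℝ) : N.GVal :=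
  fun y => match y with
    | .inl x => v (.inl x)
    | .inr _ => θ

lemma toGlobal_eq_toGlobalAt (v : N.LVal) :
    N.toGlobal v = N.toGlobalAt v (v (.inr ⟨0, N.kpos⟩)) := rfl

lemma gdelay_toGlobalAt (v : N.LVal) (θ δ : ℝ) :
    N.gdelay (N.toGlobalAt v θ) δ = N.toGlobalAt v (θ + δ) := by
  funext y; cases y <;> rfl

lemma ldelayed.toGlobalAt_eq {v v' : N.LVal} (h : N.ldelayed v v') (θ : ℝ) :
    N.toGlobalAt v' θ = N.toGlobalAt v θ := by
  funext y
  cases y with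
  | inl x => exact h.inl_eq x
  | inr _ => rfl

lemma lact.gact_toGlobalAt {b : N.Act} {q q' : N.State} {v w : N.LVal} {θ : ℝ}
    (h : N.lact b (q, v) (q', w)) (hθ : ∀ p ∈ N.dom b, v (.inr p) = θ) :
    N.gact b (q, N.toGlobalAt v θ) (q', N.toGlobalAt w θ) := by
  obtain ⟨tr, htr, hq, -, hguard, hres⟩ := h
  dsimp only at hguard hres
  refine ⟨tr, htr, hq, fun p hp g hg => ?_, ?_⟩
  · have hown : N.owner g.1 = p := (N.trans_wf b p _ (htr p hp).1).1 g hg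
    show Cmp.sat _ (θ - v (.inl g.1)) _
    rw [← hθ p hp, ← hown]
    exact hguard p hp g hg
  · funext y
    cases y with
    | inl x =>
      simp only [toGlobalAt, Network.greset, hres, Network.lreset]
      split_ifs with hx
      · exact hθ _ (owner_mem_dom_of_mem_reset (fun p h => (htr p h).1) hx)
      · rfl
    | inr _ => rfl

lemma LRunT.grun_toGlobalAt {l : List (N.Act × ℝ)} {c c' : N.State × N.LVal}
    (h : N.LRunT l c c') (hsort : l.Pairwise (Prod.snd ⁻¹'o (· ≤ ·))) {θ T : ℝ} (hθT : θ ≤ T)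
    (hl : ∀ i ∈ l, θ ≤ i.2 ∧ i.2 ≤ T) :
    N.GRun (l.map Prod.fst) (c.1, N.toGlobalAt c.2 θ) (c'.1, N.toGlobalAt c'.2 T) := by
  induction h generalizing θ with
  | @nil q v v' hd =>
    have := GRun.nil (q := q) (v := N.toGlobalAt v θ) _ (sub_nonneg.2 hθT)
    rwa [gdelay_toGlobalAt, add_sub_cancel, ← hd.toGlobalAt_eq T] at this
  | @cons b θb u q v v₁ c₁ c₂ hd hb hθb h ih =>
    obtain ⟨hθ, hT⟩ := hl _ List.mem_cons_self
    refine .cons (θb - θ) (sub_nonneg.2 hθ) ?_ (ih hsort.of_cons hT fun i hi =>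
      ⟨List.rel_of_pairwise_cons hsort hi, (hl i (List.mem_cons_of_mem _ hi)).2⟩)
    rw [gdelay_toGlobalAt, add_sub_cancel, ← hd.toGlobalAt_eq]
    exact hb.gact_toGlobalAt hθb

end Simulation

end Network

theorem stmt4_general (N : Network) (u : List N.Act) (q q' : N.State) (v v' : N.LVal)
    (hs : N.Synchronized v) (hs' : N.Synchronized v')
    (hr : N.LRun u (q, v) (q', v')) :
    ∃ w, N.equiv w u ∧ N.GRun w (q, N.toGlobal v) (q', N.toGlobal v') := by
  obtain ⟨l, rfl, hl, hbounds⟩ := hr.exists_lrunT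
  obtain ⟨hsorted, hequiv⟩ := hl.insertionSort
  refine ⟨_, hequiv, ?_⟩
  have hbounds' : ∀ i ∈ l.insertionSort (Prod.snd ⁻¹'o (· ≤ ·)),
      v (.inr ⟨0, N.kpos⟩) ≤ i.2 ∧ i.2 ≤ v' (.inr ⟨0, N.kpos⟩) := by
    intro i hi
    obtain ⟨p, hlo, hhi⟩ := hbounds i (List.mem_insertionSort _ |>.1 hi)
    exact ⟨(hs _ p).trans_le hlo, hhi.trans_eq (hs' p _)⟩
  rw [Network.toGlobal_eq_toGlobalAt, Network.toGlobal_eq_toGlobalAt]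
  exact hsorted.grun_toGlobalAt (List.pairwise_insertionSort _ _) (hr.inr_le _) hbounds'

theorem stmt4 (N : Network) (u : List N.Act) (q q' : N.State) (v v' : N.LVal)
    (hv : N.IsLVal v) (hs : N.Synchronized v) (hs' : N.Synchronized v')
    (hr : N.LRun u (q, v) (q', v')) :
    ∃ w, N.equiv w u ∧ N.GRun w (q, N.toGlobal v) (q', N.toGlobal v') :=
  stmt4_general N u q q' v v' hs hs' hr
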